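/- Let L̂, L and Ξ: L̂ → L be as in the context. Then Ξ is injective if and only if #{i ∈ {0,…,p} : m^{(i)} > 1} ≤ 1. -/

import Mathlib

/-!
STATEMENT 18: the canonical map `Ξ : L̂ → L` is injective iff at most one point has
`m^{(i)} > 1`.
-/
open Matrix BigOperators

noncomputable section

/-! ### Formal Laurent series preliminaries -/

/-- Evaluation of a polynomial at `z⁻¹`. -/
def polyZinv (q : Polynomial ℂ) : LaurentSeries ℂ :=
  q.sum fun k c => HahnSeries.single (-(k : ℤ)) c

/-- A Laurent series lies in `ℂ[[z]]`. -/
def Tame (f : LaurentSeries ℂ) : Prop := ∀ k : ℤ, k < 0 → f.coeff k = 0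

/-- A Laurent series is a principal part (class representative in `ℂ((z))/ℂ[[z]]`). -/
def IsPrincipal (f : LaurentSeries ℂ) : Prop := ∀ k : ℤ, 0 ≤ k → f.coeff k = 0

/-- `GL(n, ℂ[[z]])`. -/
abbrev GLps (n : ℕ) := (Matrix (Fin n) (Fin n) (PowerSeries ℂ))ˣ

/-- `GL(n, ℂ)`. -/
abbrev GLc (n : ℕ) := (Matrix (Fin n) (Fin n) ℂ)ˣ

/-- The inclusion `GL(n, ℂ[[z]]) → GL(n, ℂ((z)))`. -/
def glMap {n : ℕ} : GLps n →* (Matrix (Fin n) (Fin n) (LaurentSeries ℂ))ˣ :=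
  Units.map ((HahnSeries.ofPowerSeries ℤ ℂ).mapMatrix).toMonoidHom

/-- The inclusion `GL(n, ℂ) → GL(n, ℂ((z)))`. -/
def glC {n : ℕ} : GLc n →* (Matrix (Fin n) (Fin n) (LaurentSeries ℂ))ˣ :=
  Units.map ((HahnSeries.C : ℂ →+* LaurentSeries ℂ).mapMatrix).toMonoidHom

/-- Conjugation of a matrix of Laurent series by `X ∈ GL(n, ℂ[[z]])`. -/
def conjPS {n : ℕ} (X : GLps n) (B : Matrix (Fin n) (Fin n) (LaurentSeries ℂ)) :
    Matrix (Fin n) (Fin n) (LaurentSeries ℂ) :=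
  (glMap X).val * B * ((glMap X)⁻¹).val

/-- Conjugation by a constant invertible matrix. -/
def conjC {n : ℕ} (g : GLc n) (B : Matrix (Fin n) (Fin n) (LaurentSeries ℂ)) :
    Matrix (Fin n) (Fin n) (LaurentSeries ℂ) :=
  (glC g).val * B * ((glC g)⁻¹).val

/-- The matrix of `z^k`-coefficients of a matrix of Laurent series. -/
def coeffM {n : ℕ} (M : Matrix (Fin n) (Fin n) (LaurentSeries ℂ)) (k : ℤ) :
    Matrix (Fin n) (Fin n) ℂ := fun a b => (M a b).coeff k

/-! ### Finite quivers and representations of double quivers -/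

/-- A finite quiver. -/
structure FinQuiver where
  V : Type
  E : Type
  [fintypeV : Fintype V]
  [decEqV : DecidableEq V]
  [fintypeE : Fintype E]
  [decEqE : DecidableEq E]
  src : E → V
  tgt : E → V

attribute [instance] FinQuiver.fintypeV FinQuiver.decEqV FinQuiver.fintypeE FinQuiver.decEqE

namespace FinQuiver

variable (Q : FinQuiver) (α : Q.V → ℕ)

/-- The representation space of the double quiver `Q̄` with dimension vector `α`. -/
abbrev Rep :=
  ∀ e : Q.E, Matrix (Fin (α (Q.tgt e))) (Fin (α (Q.src e))) ℂ ×
    Matrix (Fin (α (Q.src e))) (Fin (α (Q.tgt e))) ℂ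

/-- The group `G = ∏_{a ∈ Q₀} GL(α_a, ℂ)`. -/
abbrev GGroup := ∀ a : Q.V, (Matrix (Fin (α a)) (Fin (α a)) ℂ)ˣ

variable {Q α}

/-- The action of `G` on `Rep(Q̄,α)`. -/
def act (g : Q.GGroup α) (x : Q.Rep α) : Q.Rep α := fun e =>
  ((g (Q.tgt e)).val * (x e).1 * ((g (Q.src e))⁻¹).val,
   (g (Q.src e)).val * (x e).2 * ((g (Q.tgt e))⁻¹).val)

/-- The moment map `μ`. -/
def mu (x : Q.Rep α) (a : Q.V) : Matrix (Fin (α a)) (Fin (α a)) ℂ :=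
  (∑ e : Q.E, if h : Q.tgt e = a then
      (Matrix.reindex (finCongr (congrArg α h)) (finCongr (congrArg α h))
        ((x e).1 * (x e).2)) else 0)
  - ∑ e : Q.E, if h : Q.src e = a then
      (Matrix.reindex (finCongr (congrArg α h)) (finCongr (congrArg α h))
        ((x e).2 * (x e).1)) else 0

/-- A collection of subspaces invariant under all the components of `x`. -/
def InvFamily (x : Q.Rep α) (W : ∀ a : Q.V, Submodule ℂ (Fin (α a) → ℂ)) : Prop :=
  ∀ e : Q.E, (∀ v ∈ W (Q.src e), (x e).1.mulVec v ∈ W (Q.tgt e)) ∧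
             (∀ v ∈ W (Q.tgt e), (x e).2.mulVec v ∈ W (Q.src e))

/-- `x` is an irreducible representation of the double quiver. -/
def Irred (x : Q.Rep α) : Prop :=
  ∀ W : ∀ a : Q.V, Submodule ℂ (Fin (α a) → ℂ),
    InvFamily x W → (∀ a, W a = ⊥) ∨ (∀ a, W a = ⊤)

variable (Q)

/-! ### The root system of a finite quiver -/

/-- The Euler form. -/
def euler (β γ : Q.V → ℤ) : ℤ :=
  (∑ a : Q.V, β a * γ a) - ∑ e : Q.E, β (Q.src e) * γ (Q.tgt e)

/-- The symmetrized Euler form. -/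
def bform (β γ : Q.V → ℤ) : ℤ := euler Q β γ + euler Q γ β

/-- `q(β) = (β,β)/2`. -/
def qform (β : Q.V → ℤ) : ℤ := euler Q β β

/-- `p(β) = 1 − q(β)`. -/
def pform (β : Q.V → ℤ) : ℤ := 1 - qform Q β

/-- A vertex with no edge-loop. -/
def LoopFree (a : Q.V) : Prop := ∀ e : Q.E, ¬(Q.src e = a ∧ Q.tgt e = a)

/-- The coordinate vector at a vertex. -/
def eps (a : Q.V) : Q.V → ℤ := fun b => if b = a then 1 else 0

/-- The fundamental reflection at a vertex. -/
def reflV (a : Q.V) (β : Q.V → ℤ) : Q.V → ℤ := β - bform Q β (eps Q a) • eps Q a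

/-- One reflection step. -/
def reflStep (β γ : Q.V → ℤ) : Prop := ∃ a : Q.V, LoopFree Q a ∧ γ = reflV Q a β

/-- The real roots. -/
def realRoots : Set (Q.V → ℤ) :=
  {β | ∃ a : Q.V, LoopFree Q a ∧ Relation.ReflTransGen (reflStep Q) (eps Q a) β}

/-- The support. -/
def supp (β : Q.V → ℤ) : Set Q.V := {a | β a ≠ 0}

/-- Connectedness of the support of `β` in the underlying graph of `Q`. -/
def ConnSupport (β : Q.V → ℤ) : Prop :=
  ∀ a ∈ supp Q β, ∀ b ∈ supp Q β,
    Relation.ReflTransGen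
      (fun u v => u ∈ supp Q β ∧ v ∈ supp Q β ∧
        ∃ e : Q.E, (Q.src e = u ∧ Q.tgt e = v) ∨ (Q.src e = v ∧ Q.tgt e = u)) a b

/-- The fundamental set. -/
def fundSet : Set (Q.V → ℤ) :=
  {β | β ≠ 0 ∧ (∀ a, 0 ≤ β a) ∧ (∀ a, LoopFree Q a → bform Q β (eps Q a) ≤ 0) ∧
    ConnSupport Q β}

/-- The imaginary roots. -/
def imRoots : Set (Q.V → ℤ) :=
  {β | ∃ γ, (γ ∈ fundSet Q ∨ -γ ∈ fundSet Q) ∧ Relation.ReflTransGen (reflStep Q) γ β}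

/-- The roots. -/
def roots : Set (Q.V → ℤ) := realRoots Q ∪ imRoots Q

/-- The positive roots. -/
def posRoots : Set (Q.V → ℤ) := {β ∈ roots Q | ∀ a, 0 ≤ β a}

/-- `λ·β`. -/
def lamDot (lam : Q.V → ℂ) (β : Q.V → ℤ) : ℂ := ∑ a : Q.V, lam a * (β a : ℂ)

variable {Q}

end FinQuiver

/-! ### The data of a collection of HTL normal forms -/

/-- A collection `B = (B^{(0)}, …, B^{(p)})` of unramified HTL normal forms of size `n`,
`B^{(i)} = diag(q^{(i)}_j(z⁻¹)I_{n^{(i)}_j} + R^{(i)}_j z⁻¹)_{j=1,…,m^{(i)}}`,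
together with eigenvalue data `ξ^{[i,j]}_1, …, ξ^{[i,j]}_{e_{[i,j]}}` with
`∏_k (R^{(i)}_j − ξ^{[i,j]}_k) = 0`. -/
structure ConnData where
  n : ℕ
  hn : 0 < n
  p : ℕ
  m : Fin (p+1) → ℕ
  hm : ∀ i, 0 < m i
  nb : (i : Fin (p+1)) → Fin (m i) → ℕ
  hnb : ∀ i j, 0 < nb i j
  hsum : ∀ i, ∑ j, nb i j = n
  q : (i : Fin (p+1)) → Fin (m i) → Polynomial ℂ
  hq0 : ∀ i j, (q i j).coeff 0 = 0
  hq1 : ∀ i j, (q i j).coeff 1 = 0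
  hqd : ∀ i (j j' : Fin (m i)), j ≠ j' → q i j ≠ q i j'
  hreg : ∀ i, i ≠ 0 → m i = 1 → ∀ j, q i j = 0
  R : (i : Fin (p+1)) → (j : Fin (m i)) → Matrix (Fin (nb i j)) (Fin (nb i j)) ℂ
  e : (i : Fin (p+1)) → Fin (m i) → ℕ
  he : ∀ i j, 0 < e i j
  xi : (i : Fin (p+1)) → (j : Fin (m i)) → Fin (e i j) → ℂ
  hxi : ∀ i j,
    (List.ofFn fun k => R i j - xi i j k • (1 : Matrix (Fin (nb i j)) (Fin (nb i j)) ℂ)).prod = 0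

namespace ConnData

variable (D : ConnData)

/-- `i ∈ I_irr`. -/
def isIrr (i : Fin (D.p+1)) : Prop := 1 < D.m i ∨ i = 0

instance : DecidablePred D.isIrr := fun _ => inferInstanceAs (Decidable (_ ∨ _))

/-- The set of indices of irregular type. -/
abbrev IrrIdx := {i : Fin (D.p+1) // D.isIrr i}

/-- The set of indices of irregular type other than `0`. -/
abbrev IrrNz := {i : Fin (D.p+1) // D.isIrr i ∧ i ≠ 0}

/-- The unique block index at a point. -/
def j1 (i : Fin (D.p+1)) : Fin (D.m i) := ⟨0, D.hm i⟩

/-- `d_i(j,j') = deg(q^{(i)}_j − q^{(i)}_{j'}) − 2`. -/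
def dd (i : Fin (D.p+1)) (j j' : Fin (D.m i)) : ℕ := ((D.q i j) - (D.q i j')).natDegree - 2

/-- The vertex set of the quiver: mid vertices `[i,j]` (for `i ∈ I_irr`) and leg
vertices `[i,j,k]`, `1 ≤ k ≤ e_{[i,j]}−1`. -/
abbrev Vq :=
  (Σ i : D.IrrIdx, Fin (D.m i.1)) ⊕ (Σ i : Fin (D.p+1), Σ j : Fin (D.m i), Fin (D.e i j - 1))

/-- The vertex `[i,j]`, `i ∈ I_irr`. -/
def vmid (i : D.IrrIdx) (j : Fin (D.m i.1)) : D.Vq := Sum.inl ⟨i, j⟩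

/-- `0 ∈ I_irr`. -/
def irr0 : D.IrrIdx := ⟨0, Or.inr rfl⟩

/-- The vertex `[0,j]`. -/
def vmid0 (j : Fin (D.m 0)) : D.Vq := Sum.inl ⟨D.irr0, j⟩

/-- The leg vertex `[i,j,k+1]` (`k` is 0-based). -/
def vleg (i : Fin (D.p+1)) (j : Fin (D.m i)) (k : Fin (D.e i j - 1)) : D.Vq :=
  Sum.inr ⟨i, j, k⟩

/-- Arrows `[0,j] → [i,j']`, `i ∈ I_irr \ {0}`. -/
abbrev Arr1 := Fin (D.m 0) × (Σ i : D.IrrNz, Fin (D.m i.1))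
/-- `d_i(j,j')` arrows `[i,j] → [i,j']` for `i ∈ I_irr`, `j < j'`. -/
abbrev Arr2 := Σ i : D.IrrIdx, Σ jj : {x : Fin (D.m i.1) × Fin (D.m i.1) // x.1 < x.2},
  Fin (D.dd i.1 jj.1.1 jj.1.2)
/-- Leg arrows `[i,j,k] → [i,j,k−1]`, `k ≥ 2`. -/
abbrev Arr3 := Σ i : Fin (D.p+1), Σ j : Fin (D.m i), Fin (D.e i j - 2)
/-- Arrows `[i,j,1] → [i,j]`, `i ∈ I_irr`. -/
abbrev Arr4 := Σ i : D.IrrIdx, {j : Fin (D.m i.1) // 2 ≤ D.e i.1 j}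
/-- Arrows `[i,1,1] → [0,j]`, `i ∈ I_reg`. -/
abbrev Arr5 := {i : Fin (D.p+1) // ¬ D.isIrr i ∧ 2 ≤ D.e i (D.j1 i)} × Fin (D.m 0)

/-- The arrow set of the quiver. -/
abbrev Arr := D.Arr1 ⊕ D.Arr2 ⊕ D.Arr3 ⊕ D.Arr4 ⊕ D.Arr5

/-- Sources of arrows. -/
def qsrc : D.Arr → D.Vq
  | .inl (j, ⟨_, _⟩) => D.vmid0 j
  | .inr (.inl ⟨i, jj, _⟩) => D.vmid i jj.1.1
  | .inr (.inr (.inl ⟨i, j, t⟩)) => D.vleg i j ⟨t.1 + 1, by have := t.isLt; omega⟩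
  | .inr (.inr (.inr (.inl ⟨i, j⟩))) => D.vleg i.1 j.1 ⟨0, by have := j.2; omega⟩
  | .inr (.inr (.inr (.inr (i, _)))) => D.vleg i.1 (D.j1 i.1) ⟨0, by have := i.2.2; omega⟩

/-- Targets of arrows. -/
def qtgt : D.Arr → D.Vq
  | .inl (_, ⟨i, j'⟩) => D.vmid ⟨i.1, i.2.1⟩ j'
  | .inr (.inl ⟨i, jj, _⟩) => D.vmid i jj.1.2
  | .inr (.inr (.inl ⟨i, j, t⟩)) => D.vleg i j ⟨t.1, by have := t.isLt; omega⟩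
  | .inr (.inr (.inr (.inl ⟨i, j⟩))) => D.vmid i j.1
  | .inr (.inr (.inr (.inr (_, j)))) => D.vmid0 j

/-- The quiver `Q` associated with `B`. -/
def quiv : FinQuiver := FinQuiver.mk (V := D.Vq) (E := D.Arr) D.qsrc D.qtgt

/-- The dimension vector `α`. -/
def alphaV : D.Vq → ℕ
  | .inl ⟨i, j⟩ => D.nb i.1 j
  | .inr ⟨i, j, k⟩ =>
      ((List.ofFn fun l : Fin (k.1 + 1) =>
          D.R i j - D.xi i j ⟨l.1, by have := l.isLt; have := k.isLt; omega⟩ •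
            (1 : Matrix (Fin (D.nb i j)) (Fin (D.nb i j)) ℂ)).prod).rank

/-- The dimension vector `α` as an integral vector. -/
def alphaZ : D.Vq → ℤ := fun a => (D.alphaV a : ℤ)

/-- `Σ_{i ∈ I_reg} ξ^{[i,1]}_1`. -/
def regSumXi : ℂ :=
  ∑ i : Fin (D.p+1), if D.isIrr i then 0 else D.xi i (D.j1 i) ⟨0, D.he _ _⟩

/-- The parameter `λ`. -/
def lamV : D.Vq → ℂ
  | .inl ⟨⟨i, _⟩, j⟩ =>
      if h : i = 0 then - D.xi 0 (h ▸ j) ⟨0, D.he _ _⟩ - D.regSumXi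
      else - D.xi i j ⟨0, D.he _ _⟩
  | .inr ⟨i, j, k⟩ =>
      D.xi i j ⟨k.1, by have := k.isLt; omega⟩ - D.xi i j ⟨k.1 + 1, by have := k.isLt; omega⟩

/-- The lattice `L ⊆ ℤ^{Q₀}`. -/
def latt : Set (D.Vq → ℤ) :=
  {β | ∀ i : D.IrrNz,
    (∑ j : Fin (D.m 0), β (D.vmid0 j)) = ∑ j : Fin (D.m i.1), β (D.vmid ⟨i.1, i.2.1⟩ j)}

/-- `L`-irreducibility of a representation: no nontrivial proper invariant collection
of subspaces whose dimension vector lies in `L`. -/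
def LIrred {αd : D.Vq → ℕ} (x : D.quiv.Rep αd) : Prop :=
  ∀ W : ∀ a : D.Vq, Submodule ℂ (Fin (αd a) → ℂ),
    FinQuiver.InvFamily x W →
    (fun a => (Module.finrank ℂ (W a) : ℤ)) ∈ D.latt →
    (∀ a, W a = ⊥) ∨ (∀ a, W a = ⊤)

/-- The block matrix formed by the components of `x` along the arrows `[0,j] → [i,j']`
for a fixed `i ∈ I_irr \ {0}`. -/
def detMat {αd : D.Vq → ℕ} (x : D.quiv.Rep αd) (i : D.IrrNz) :
    Matrix (Σ j' : Fin (D.m i.1), Fin (αd (D.vmid ⟨i.1, i.2.1⟩ j')))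
      (Σ j : Fin (D.m 0), Fin (αd (D.vmid0 j))) ℂ :=
  fun rc cc => (x (Sum.inl (cc.1, ⟨i, rc.1⟩))).1 rc.2 cc.2

/-- The determinant conditions: the block matrices along the arrows `[0,j] → [i,j']`
are invertible for all `i ∈ I_irr \ {0}`. -/
def DetCond {αd : D.Vq → ℕ} (x : D.quiv.Rep αd) : Prop :=
  ∀ i : D.IrrNz, Function.Bijective (Matrix.mulVecLin (D.detMat x i))

/-- The set underlying `M_λ(Q,α)^dif`. -/
def MdifSub (lam : D.Vq → ℂ) (αd : D.Vq → ℕ) :=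
  {x : D.quiv.Rep αd //
    (∀ a, FinQuiver.mu x a = lam a • (1 : Matrix (Fin (αd a)) (Fin (αd a)) ℂ)) ∧
    D.LIrred x ∧ D.DetCond x}

/-- `M_λ(Q,α)^dif`: the quotient of the `L`-irreducible locus (with the determinant
conditions) of `μ⁻¹(λ)` by `G`. -/
def Mdif (lam : D.Vq → ℂ) (αd : D.Vq → ℕ) :=
  Quot (fun x y : D.MdifSub lam αd => ∃ g : D.quiv.GGroup αd, FinQuiver.act g x.1 = y.1)

/-- Identification of the disjoint union of the blocks of `B^{(i)}` with `Fin n`. -/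
def sigmaEquiv (i : Fin (D.p+1)) : (Σ j : Fin (D.m i), Fin (D.nb i j)) ≃ Fin D.n :=
  Fintype.equivFinOfCardEq (by simpa using D.hsum i)

/-- The matrix of the HTL normal form `B^{(i)}`. -/
def BmatAt (i : Fin (D.p+1)) : Matrix (Fin D.n) (Fin D.n) (LaurentSeries ℂ) :=
  Matrix.reindex (D.sigmaEquiv i) (D.sigmaEquiv i)
    (Matrix.blockDiagonal' fun j =>
      (fun a b => (if a = b then polyZinv (D.q i j) else 0) +
        HahnSeries.single (-1 : ℤ) (D.R i j a b)))

/-- Membership in the moduli space data: a tuple of principal parts, lying in the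
truncated orbits of the `B^{(i)}`, with vanishing total residue, which is
irreducible. -/
def MBMem (A : Fin (D.p+1) → Matrix (Fin D.n) (Fin D.n) (LaurentSeries ℂ)) : Prop :=
  (∀ i a b, IsPrincipal (A i a b)) ∧
  (∀ i, ∃ X : GLps D.n, ∀ a b, Tame ((A i - conjPS X (D.BmatAt i)) a b)) ∧
  (∑ i, coeffM (A i) (-1)) = 0 ∧
  (∀ W : Submodule ℂ (Fin D.n → ℂ),
    (∀ i (k : ℤ), ∀ v ∈ W, (coeffM (A i) k).mulVec v ∈ W) → W = ⊥ ∨ W = ⊤)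

/-- The set underlying the moduli space `M(B)`. -/
def MBSub := {A : Fin (D.p+1) → Matrix (Fin D.n) (Fin D.n) (LaurentSeries ℂ) // D.MBMem A}

/-- The moduli space `M(B)` of stable meromorphic connections on trivial bundles with
formal types `B`: the quotient by simultaneous `GL(n,ℂ)`-conjugation. -/
def MB := Quot (fun A A' : D.MBSub => ∃ g : GLc D.n, ∀ i, conjC g (A.1 i) = A'.1 i)

/-- The index set `J` of tuples `𝐢 = ([i,j_i])_{0 ≤ i ≤ p}`. -/
abbrev Jtype := (i : Fin (D.p+1)) → Fin (D.m i)

/-- The set of leg vertices. -/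
abbrev LegIdx := Σ i : Fin (D.p+1), Σ j : Fin (D.m i), Fin (D.e i j - 1)

/-- The leg vertex as a vertex of the quiver. -/
def legV (a : D.LegIdx) : D.Vq := Sum.inr a

/-- `ε_𝐢 ∈ ℤ^{Q₀}`: entry `1` at `[i,j_i]` for `i ∈ I_irr`, `0` elsewhere. -/
def epsJ (jj : D.Jtype) : D.Vq → ℤ
  | .inl ⟨⟨i, _⟩, j⟩ => if j = jj i then 1 else 0
  | .inr _ => 0

/-- The index set `C = {c_a : a ∈ J ∪ Q₀^leg}` of the generators of `L̂`. -/
abbrev CIdx := D.Jtype ⊕ D.LegIdx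

/-- The value of the bilinear form of `L̂` on two leg generators. -/
def legForm (a a' : D.LegIdx) : ℤ :=
  if h : a.1 = a'.1 then
    (if _h2 : (h ▸ a.2.1) = a'.2.1 then
      (if a.2.2.1 = a'.2.2.1 then 2
       else if a.2.2.1 = a'.2.2.1 + 1 ∨ a'.2.2.1 = a.2.2.1 + 1 then -1 else 0)
     else 0)
  else 0

/-- The bilinear form of `L̂` on the generators:
`(c_𝐢, c_𝐢') = 2 − Σ_{i : j_i ≠ j'_i} (d_i(j_i,j'_i) + 2)`,
`(c_𝐢, c_{[i,j,k]}) = −1` iff `j = j_i` and `k = 1`,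
`(c_{[i,j,k]}, c_{[i',j',k']}) = 2, −1, 0` according to coincidence/adjacency. -/
def genForm : D.CIdx → D.CIdx → ℤ
  | .inl jj, .inl jj' =>
      2 - ∑ i : Fin (D.p+1),
        (if jj i ≠ jj' i then ((D.dd i (jj i) (jj' i) : ℤ) + 2) else 0)
  | .inl jj, .inr a => if a.2.1 = jj a.1 ∧ a.2.2.1 = 0 then -1 else 0
  | .inr a, .inl jj => if a.2.1 = jj a.1 ∧ a.2.2.1 = 0 then -1 else 0
  | .inr a, .inr a' => D.legForm a a'

/-- The symmetric bilinear form of the Kac–Moody root lattice `L̂`. -/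
def hatForm (γ γ' : D.CIdx → ℤ) : ℤ :=
  ∑ c : D.CIdx, ∑ c' : D.CIdx, γ c * γ' c' * D.genForm c c'

/-- The generator `c_a` of `L̂`. -/
def hatGen (c0 : D.CIdx) : D.CIdx → ℤ := fun c => if c = c0 then 1 else 0

/-- The simple reflection of `L̂` in the simple root `c_a`. -/
def hatRefl (c0 : D.CIdx) (γ : D.CIdx → ℤ) : D.CIdx → ℤ :=
  γ - D.hatForm γ (D.hatGen c0) • D.hatGen c0

/-- The canonical map `Ξ : L̂ → L`:
`Ξ(γ)_{[i,j]} = Σ_{𝐢 ∈ J, j_i = j} γ_{c_𝐢}` and `Ξ(γ)_{[i,j,k]} = γ_{c_{[i,j,k]}}`. -/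
def XiMap (γ : D.CIdx → ℤ) : D.Vq → ℤ
  | .inl ⟨⟨i, _⟩, j⟩ => ∑ jj : D.Jtype, (if jj i = j then γ (Sum.inl jj) else 0)
  | .inr a => γ (Sum.inr a)

/-- The reflection `s_𝐢(β) = β − (β,ε_𝐢)ε_𝐢` on `ℤ^{Q₀}`. -/
def sJ (jj : D.Jtype) (β : D.Vq → ℤ) : D.Vq → ℤ :=
  β - FinQuiver.bform D.quiv β (D.epsJ jj) • D.epsJ jj

/-- The action of the generator `s_a`, `a ∈ J ∪ Q₀^leg`, on `ℤ^{Q₀}`: `s_𝐢` for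
`a = 𝐢 ∈ J` and the simple reflection at the leg vertex otherwise. -/
def sDown (c0 : D.CIdx) (β : D.Vq → ℤ) : D.Vq → ℤ :=
  match c0 with
  | .inl jj => D.sJ jj β
  | .inr a => FinQuiver.reflV D.quiv (D.legV a) β

end ConnData

end

/-!
On the generators `c_𝐢`, `𝐢 ∈ J = ∏ᵢ {1, …, m^{(i)}}`, the components `Ξ(γ)_{[i,j]}` are the
marginals of `γ` in the coordinate `i`, while the leg components just copy `γ`. A function on a
product is recovered from one marginal when all other factors are singletons. If two factors
`i₁ ≠ i₂` have two elements, the alternating sum of the indicators of the four corners of a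
rectangle in these coordinates is nonzero but has vanishing marginals.
-/

open Finset Function

section Marginal

variable {ι : Type*} [Fintype ι] [DecidableEq ι] {κ : ι → Type*} [∀ i, DecidableEq (κ i)]

def rectangle (x : ∀ i, κ i) {i₁ i₂ : ι} (a : κ i₁) (b : κ i₂) : (∀ i, κ i) → ℤ :=
  Pi.single x 1 + Pi.single (update (update x i₁ a) i₂ b) 1 - Pi.single (update x i₁ a) 1
    - Pi.single (update x i₂ b) 1

theorem rectangle_apply_self (x : ∀ i, κ i) {i₁ i₂ : ι} {a : κ i₁} {b : κ i₂} (ha : a ≠ x i₁)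
    (hb : b ≠ x i₂) : rectangle x a b x = 1 := by
  have h₁ : x ≠ update x i₁ a := fun hx => ha (by rw [hx, update_self])
  have h₂ : x ≠ update x i₂ b := fun hx => hb (by rw [hx, update_self])
  have h₁₂ : x ≠ update (update x i₁ a) i₂ b := fun hx => hb (by rw [hx, update_self])
  simp [rectangle, h₁, h₂, h₁₂]

variable [∀ i, Fintype (κ i)] {M : Type*}

def marginal [AddCommMonoid M] (f : (∀ i, κ i) → M) (i : ι) (j : κ i) : M :=
  ∑ x ∈ univ.filter (· i = j), f x

theorem marginal_apply_of_subsingleton [AddCommMonoid M] (f : (∀ i, κ i) → M)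
    {i : ι} (h : ∀ i' ≠ i, Subsingleton (κ i')) (x : ∀ i, κ i) :
    marginal f i (x i) = f x := by
  refine sum_eq_single_of_mem x (by simp) fun y hy hyx => (hyx (funext fun i' => ?_)).elim
  by_cases hi : i' = i
  · subst hi; exact (mem_filter.mp hy).2
  · exact (h i' hi).elim _ _

theorem marginal_add [AddCommMonoid M] (f g : (∀ i, κ i) → M) (i : ι) (j : κ i) :
    marginal (f + g) i j = marginal f i j + marginal g i j :=
  sum_add_distrib

theorem marginal_sub [AddCommGroup M] (f g : (∀ i, κ i) → M) (i : ι) (j : κ i) :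
    marginal (f - g) i j = marginal f i j - marginal g i j :=
  sum_sub_distrib ..

theorem marginal_single [AddCommMonoid M] (y : ∀ i, κ i) (c : M) (i : ι) (j : κ i) :
    marginal (Pi.single y c) i j = if y i = j then c else 0 := by
  simp [marginal, sum_pi_single']

theorem marginal_rectangle (x : ∀ i, κ i) {i₁ i₂ : ι} (h : i₁ ≠ i₂) (a : κ i₁) (b : κ i₂)
    (i : ι) (j : κ i) : marginal (rectangle x a b) i j = 0 := by
  simp only [rectangle, marginal_sub, marginal_add, marginal_single]
  rcases eq_or_ne i i₁ with rfl | h₁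
  · simp [update_of_ne h]
  rcases eq_or_ne i i₂ with rfl | h₂
  · simp [update_of_ne h₁]
  · simp [update_of_ne h₁, update_of_ne h₂]

end Marginal

namespace ConnData

variable (D : ConnData)

theorem XiMap_inl (γ : D.CIdx → ℤ) (i : D.IrrIdx) (j : Fin (D.m i.1)) :
    D.XiMap γ (Sum.inl ⟨i, j⟩) = marginal (γ ∘ Sum.inl) i.1 j := by
  simp [XiMap, marginal, sum_filter]

theorem XiMap_injective_of_subsingleton (i : D.IrrIdx)
    (h : ∀ i' ≠ i.1, Subsingleton (Fin (D.m i'))) : Injective D.XiMap := by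
  intro γ γ' hγ
  funext c
  rcases c with jj | a
  · have := congrFun hγ (Sum.inl ⟨i, jj i⟩)
    rwa [XiMap_inl, XiMap_inl, marginal_apply_of_subsingleton _ h,
      marginal_apply_of_subsingleton _ h] at this
  · exact congrFun hγ (Sum.inr a)

theorem not_injective_XiMap {i₁ i₂ : Fin (D.p + 1)} (h : i₁ ≠ i₂) (h₁ : 1 < D.m i₁)
    (h₂ : 1 < D.m i₂) : ¬ Injective D.XiMap := by
  let x : D.Jtype := fun i => ⟨0, D.hm i⟩
  let γ : D.CIdx → ℤ := Sum.elim (rectangle x (⟨1, h₁⟩ : Fin _) (⟨1, h₂⟩ : Fin _)) 0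
  have hγ : D.XiMap γ = D.XiMap 0 := by
    funext v
    rcases v with ⟨i, j⟩ | a
    · rw [XiMap_inl, XiMap_inl]
      exact (marginal_rectangle x h _ _ _ _).trans (by simp [marginal])
    · rfl
  have hx : γ (Sum.inl x) = 1 := rectangle_apply_self x (by simp [x]) (by simp [x])
  exact fun hinj => one_ne_zero (hx.symm.trans (congrFun (hinj hγ) _))

theorem exists_forall_ne_subsingleton (h : Fintype.card {i : Fin (D.p + 1) // 1 < D.m i} ≤ 1) :
    ∃ i : D.IrrIdx, ∀ i' ≠ i.1, Subsingleton (Fin (D.m i')) := by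
  have hsub (i' : Fin (D.p + 1)) (hi' : ¬ 1 < D.m i') : Subsingleton (Fin (D.m i')) :=
    Fintype.card_le_one_iff_subsingleton.mp (by rw [Fintype.card_fin]; omega)
  by_cases hex : ∃ i₀, 1 < D.m i₀
  · obtain ⟨i₀, h₀⟩ := hex
    refine ⟨⟨i₀, Or.inl h₀⟩, fun i' hi' => hsub i' fun h' => ?_⟩
    have : 1 < Fintype.card {i // 1 < D.m i} :=
      Fintype.one_lt_card_iff.mpr ⟨⟨i', h'⟩, ⟨i₀, h₀⟩, fun e => hi' (congrArg Subtype.val e)⟩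
    omega
  · exact ⟨D.irr0, fun i' _ => hsub i' fun h' => hex ⟨i', h'⟩⟩

end ConnData

open ConnData FinQuiver in
/-- STATEMENT 18. -/
theorem Xi_injective_iff (D : ConnData) :
    Function.Injective D.XiMap ↔ Fintype.card {i : Fin (D.p+1) // 1 < D.m i} ≤ 1 := by
  constructor
  · intro hinj
    by_contra! hcard
    obtain ⟨⟨i₁, h₁⟩, ⟨i₂, h₂⟩, hne⟩ := Fintype.one_lt_card_iff.mp hcard
    exact D.not_injective_XiMap (fun h => hne (Subtype.ext h)) h₁ h₂ hinj
  · intro hcard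
    obtain ⟨i, hi⟩ := D.exists_forall_ne_subsingleton hcard
    exact D.XiMap_injective_of_subsingleton i hi
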